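/- arXiv:0910.1990 — 8 statements merged into one kernel-verified Lean document; each statement's English description precedes it below -/
import Mathlib

section
/- Let n ≥ 1 and let α : {0,...,2^n−1} → ℂ with α_i ≠ 0 for all i. Then α is fully separable if and only if α is pair product invariant. -/
/-!
For `i < 2^k` the index `2^k - 1 - i` complements the lowest `k` bits of `i` and has all higher
bits zero, so for a product state each one-qubit factor of `α i * α (2^k - 1 - i)` is independent
of `i`. Conversely, pair product invariance at levels `m` and `m + 1` gives
`α (2^m + b) * α (2^m - 1) = α b * α (2^(m+1) - 1)` for `b < 2^m`; as the amplitudes are nonzero,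
setting bit `m` multiplies the amplitude by the fixed ratio `α (2^(m+1) - 1) / α (2^m - 1)`,
which makes `α` a product.
-/

/-- A vector `α` on indices `{0, ..., 2^n - 1}` is *pair product invariant* if for every
`k` with `1 ≤ k ≤ n` there is a constant `c` such that `α i * α (2^k - i - 1) = c`
for all `i` with `0 ≤ i ≤ 2^k - 1`. -/
def PairProductInvariant (n : ℕ) (α : ℕ → ℂ) : Prop :=
  ∀ k, 1 ≤ k → k ≤ n → ∃ c : ℂ, ∀ i, i ≤ 2 ^ k - 1 → α i * α (2 ^ k - i - 1) = c

/-- Identifying an index `a ∈ {0, ..., 2^n - 1}` with its binary expansion (most significant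
bit first, so the `i`-th bit of `a` is `a.testBit (n - 1 - i)`), a vector `α` is
*fully separable* if it is a product `α(x₁ ... xₙ) = ψ₁(x₁) ⋯ ψₙ(xₙ)` of one-qubit vectors. -/
def FullySeparable (n : ℕ) (α : ℕ → ℂ) : Prop :=
  ∃ ψ : Fin n → Bool → ℂ, ∀ a, a < 2 ^ n →
    α a = ∏ i : Fin n, ψ i (Nat.testBit a (n - 1 - (i : ℕ)))

open Finset

theorem apply_testBit_mul_apply_testBit_two_pow_sub {M : Type*} [CommMonoid M] (f : Bool → M)
    {i k : ℕ} (hi : i < 2 ^ k) (q : ℕ) :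
    f (i.testBit q) * f ((2 ^ k - i - 1).testBit q) = f false * f (decide (q < k)) := by
  rw [Nat.sub_sub, Nat.testBit_two_pow_sub_succ hi]
  by_cases hq : q < k
  · cases i.testBit q <;> simp [hq, mul_comm]
  · have : i.testBit q = false :=
      Nat.testBit_lt_two_pow (hi.trans_le (Nat.pow_le_pow_right two_pos (by omega)))
    simp [hq, this]

theorem FullySeparable.pairProductInvariant {n : ℕ} {α : ℕ → ℂ} (h : FullySeparable n α) :
    PairProductInvariant n α := by
  obtain ⟨ψ, hψ⟩ := h
  intro k _ hkn
  refine ⟨∏ j : Fin n, ψ j false * ψ j (decide (n - 1 - (j : ℕ) < k)), fun i hi => ?_⟩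
  have hik : i < 2 ^ k := by have := Nat.one_le_two_pow (n := k); omega
  have hkn : 2 ^ k ≤ 2 ^ n := Nat.pow_le_pow_right two_pos hkn
  rw [hψ i (by omega), hψ _ (by omega), ← prod_mul_distrib]
  exact prod_congr rfl fun j _ => apply_testBit_mul_apply_testBit_two_pow_sub (ψ j) hik _

theorem PairProductInvariant.mul_eq_mul_zero {n : ℕ} {α : ℕ → ℂ} (h : PairProductInvariant n α)
    {k i : ℕ} (hkn : k ≤ n) (hi : i < 2 ^ k) :
    α i * α (2 ^ k - i - 1) = α 0 * α (2 ^ k - 1) := by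
  rcases Nat.eq_zero_or_pos k with rfl | hk
  · obtain rfl : i = 0 := by simpa using hi
    rfl
  · obtain ⟨c, hc⟩ := h k hk hkn
    rw [hc i (by omega), ← hc 0 (by omega), Nat.sub_zero]

theorem PairProductInvariant.apply_two_pow_add_mul {n : ℕ} {α : ℕ → ℂ}
    (h : PairProductInvariant n α) (h0 : ∀ i, i < 2 ^ n → α i ≠ 0) {m b : ℕ} (hmn : m + 1 ≤ n)
    (hb : b < 2 ^ m) :
    α (2 ^ m + b) * α (2 ^ m - 1) = α b * α (2 ^ (m + 1) - 1) := by
  have hpow : 2 ^ (m + 1) = 2 ^ m + 2 ^ m := by ring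
  have hmn' : 2 ^ (m + 1) ≤ 2 ^ n := Nat.pow_le_pow_right two_pos hmn
  have hupper := h.mul_eq_mul_zero hmn (i := 2 ^ m - 1 - b) (by omega)
  have hlower := h.mul_eq_mul_zero (by omega) hb
  rw [show 2 ^ (m + 1) - (2 ^ m - 1 - b) - 1 = 2 ^ m + b by omega] at hupper
  rw [show 2 ^ m - b - 1 = 2 ^ m - 1 - b by omega] at hlower
  have hne : α (2 ^ m - 1 - b) * α 0 ≠ 0 := mul_ne_zero (h0 _ (by omega)) (h0 0 (by omega))
  refine mul_right_cancel₀ hne ?_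
  linear_combination α 0 * α (2 ^ m - 1) * hupper - α 0 * α (2 ^ (m + 1) - 1) * hlower

theorem eq_apply_zero_mul_prod_of_apply_two_pow_add {M : Type*} [CommMonoid M] (α r : ℕ → M)
    {m : ℕ} (h : ∀ p < m, ∀ b < 2 ^ p, α (2 ^ p + b) = α b * r p) :
    ∀ a < 2 ^ m, α a = α 0 * ∏ p ∈ range m, if a.testBit p then r p else 1 := by
  induction m with
  | zero =>
    intro a ha
    obtain rfl : a = 0 := by simpa using ha
    simp
  | succ m ih =>
    intro a ha
    have ih := ih fun p hp => h p (by omega)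
    rw [prod_range_succ]
    by_cases hlt : a < 2 ^ m
    · rw [Nat.testBit_lt_two_pow hlt, if_neg Bool.false_ne_true, mul_one]
      exact ih a hlt
    · obtain ⟨b, rfl⟩ : ∃ b, a = 2 ^ m + b := ⟨a - 2 ^ m, by omega⟩
      have hb : b < 2 ^ m := by rw [pow_succ] at ha; omega
      have hbits : ∀ p ∈ range m, (2 ^ m + b).testBit p = b.testBit p := fun p hp =>
        Nat.testBit_two_pow_add_gt (mem_range.mp hp) b
      rw [prod_congr rfl fun p hp => by rw [hbits p hp], Nat.testBit_two_pow_add_eq,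
        Nat.testBit_lt_two_pow hb, h m (by omega) b hb, ih b hb]
      simp [mul_assoc]

theorem fullySeparable_of_eq_mul_prod {n : ℕ} (hn : 1 ≤ n) {α : ℕ → ℂ} (c : ℂ)
    (φ : ℕ → Bool → ℂ) (h : ∀ a < 2 ^ n, α a = c * ∏ p ∈ range n, φ p (a.testBit p)) :
    FullySeparable n α := by
  refine ⟨fun i x => (if i = ⟨0, hn⟩ then c else 1) * φ (n - 1 - i) x, fun a ha => ?_⟩
  rw [prod_mul_distrib, Fintype.prod_ite_eq', h a ha,
    Fin.prod_univ_eq_prod_range (fun i => φ (n - 1 - i) (a.testBit (n - 1 - i))),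
    prod_range_reflect (fun p => φ p (a.testBit p))]

/-- Theorem 1 of Jorrand–Mhalla: a state with all amplitudes nonzero is fully separable
if and only if it is pair product invariant. -/
theorem fullySeparable_iff_pairProductInvariant (n : ℕ) (hn : 1 ≤ n) (α : ℕ → ℂ)
    (h0 : ∀ i, i < 2 ^ n → α i ≠ 0) :
    FullySeparable n α ↔ PairProductInvariant n α := by
  refine ⟨FullySeparable.pairProductInvariant, fun h => ?_⟩
  set r : ℕ → ℂ := fun p => α (2 ^ (p + 1) - 1) / α (2 ^ p - 1)
  have hstep : ∀ p < n, ∀ b < 2 ^ p, α (2 ^ p + b) = α b * r p := fun p hp b hb => by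
    have hpn : 2 ^ p ≤ 2 ^ n := Nat.pow_le_pow_right two_pos hp.le
    rw [← mul_div_assoc, eq_div_iff (h0 _ (by omega))]
    exact h.apply_two_pow_add_mul h0 hp hb
  exact fullySeparable_of_eq_mul_prod hn (α 0) (fun p x => if x then r p else 1)
    (eq_apply_zero_mul_prod_of_apply_two_pow_add α r hstep)
end

section
/- For every n ≥ 3 there exists a valid function f : {0,1}^n → {0,1} such that the phase state v_f of f is maximally entangled, i.e. for every index i ∈ {1,...,n} there do not exist a vector φ : {0,1} → ℂ and a vector ψ : {0,1}^{n−1} → ℂ with v_f(x) = φ(x_i) · ψ(x_1,...,x_{i−1},x_{i+1},...,x_n) for all x ∈ {0,1}^n. -/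
/-- A Boolean function `f : {0,1}^n → {0,1}` is *valid* if it is constant or balanced
(i.e. `f x = 0` for exactly `2^(n-1)` of the `2^n` inputs). -/
def ValidFn (n : ℕ) (f : (Fin n → Bool) → Bool) : Prop :=
  (∃ a, ∀ x, f x = a) ∨
    (Finset.univ.filter fun x : Fin n → Bool => f x = false).card = 2 ^ (n - 1)

/-!
The witness is the multiplexer `f x = if (every bit outside {0, 1} is set) then x 1 else x 0`.
Flipping bits 0 and 1 together negates it, so it is balanced. If the ±1 phase state of `f`
factors off qubit `i`, then the Boolean derivative `x ↦ f x ⊕ f (x with bit i flipped)` is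
constant. For the multiplexer it is not: in directions 0 and 1 because the selecting condition
takes both values, in any other direction because flipping that bit can switch the output
between bit 1 and bit 0, which may differ.
-/

lemma two_mul_card_filter_eq_false {α : Type*} [Fintype α] (f : α → Bool) {σ : α → α}
    (hσ : Function.Involutive σ) (hf : ∀ x, f (σ x) = !f x) :
    2 * (Finset.univ.filter fun x => f x = false).card = Fintype.card α := by
  have hswap : (Finset.univ.filter fun x => f x = false).card
      = (Finset.univ.filter fun x => ¬ f x = false).card :=
    Finset.card_nbij' σ σ (fun x hx => by simp_all) (fun x hx => by simp_all)
      (fun x _ => hσ x) (fun x _ => hσ x)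
  rw [two_mul, ← Finset.card_univ]
  nth_rw 2 [hswap]
  exact Finset.card_filter_add_card_filter_not _

namespace BooleanFunction

variable {ι : Type*}

def PhaseFactorsAt (f : (ι → Bool) → Bool) (i : ι) : Prop :=
  ∃ (φ : Bool → ℂ) (ψ : ({j // j ≠ i} → Bool) → ℂ),
    ∀ x, (-1 : ℂ) ^ (f x).toNat = φ (x i) * ψ (fun j => x j.1)

variable [DecidableEq ι]

def flipAt (i : ι) (x : ι → Bool) : ι → Bool := Function.update x i (!x i)

@[simp] lemma flipAt_self (i : ι) (x : ι → Bool) : flipAt i x i = !x i := by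
  simp [flipAt]

@[simp] lemma flipAt_of_ne {i j : ι} (hji : j ≠ i) (x : ι → Bool) : flipAt i x j = x j := by
  simp [flipAt, hji]

lemma flipAt_involutive (i : ι) : Function.Involutive (flipAt i) := fun x => by
  funext j; by_cases hji : j = i <;> simp_all

lemma flipAt_comm (i j : ι) (x : ι → Bool) : flipAt i (flipAt j x) = flipAt j (flipAt i x) := by
  funext k; by_cases hki : k = i <;> by_cases hkj : k = j <;> simp_all [flipAt]

def boolDeriv (i : ι) (f : (ι → Bool) → Bool) (x : ι → Bool) : Bool :=
  xor (f x) (f (flipAt i x))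

lemma boolDeriv_flipAt (i : ι) (f : (ι → Bool) → Bool) (x : ι → Bool) :
    boolDeriv i f (flipAt i x) = boolDeriv i f x := by
  rw [boolDeriv, boolDeriv, flipAt_involutive i x, Bool.xor_comm]

lemma xor_eq_xor_of_neg_one_pow_mul_eq {p q r s : Bool}
    (h : (-1 : ℂ) ^ p.toNat * (-1) ^ q.toNat = (-1) ^ r.toNat * (-1) ^ s.toNat) :
    xor p r = xor s q := by
  cases p <;> cases q <;> cases r <;> cases s <;> first | rfl | norm_num at h

lemma boolDeriv_eq_of_phaseFactorsAt {i : ι} {f : (ι → Bool) → Bool}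
    (hf : PhaseFactorsAt f i) (x y : ι → Bool) : boolDeriv i f x = boolDeriv i f y := by
  obtain ⟨φ, ψ, h⟩ := hf
  have restrict_flipAt (z : ι → Bool) :
      (fun j : {j // j ≠ i} => flipAt i z j.1) = fun j => z j.1 := by
    funext j; exact flipAt_of_ne j.2 z
  -- For `x i = y i`, the phases at `x` and `flipAt i y` multiply to the same product
  -- `φ (x i) * φ (!x i) * ψ x' * ψ y'` as the phases at `flipAt i x` and `y`.
  have of_eq (x y : ι → Bool) (hxy : x i = y i) : boolDeriv i f x = boolDeriv i f y := by
    apply xor_eq_xor_of_neg_one_pow_mul_eq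
    rw [h, h, h, h, restrict_flipAt, restrict_flipAt, flipAt_self, flipAt_self, hxy]
    ring
  by_cases hxy : x i = y i
  · exact of_eq x y hxy
  · rw [← boolDeriv_flipAt]
    exact of_eq _ _ (by rw [flipAt_self, Bool.not_eq]; exact hxy)

theorem not_phaseFactorsAt_of_boolDeriv_ne {i : ι} {f : (ι → Bool) → Bool}
    {x y : ι → Bool} (hxy : boolDeriv i f x ≠ boolDeriv i f y) : ¬ PhaseFactorsAt f i :=
  fun hf => hxy (boolDeriv_eq_of_phaseFactorsAt hf x y)

section Mux

variable [Fintype ι]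

def mux (a b : ι) (x : ι → Bool) : Bool :=
  if ∀ j, j ≠ a → j ≠ b → x j = true then x b else x a

variable {a b : ι}

lemma mux_of_forall {x : ι → Bool} (h : ∀ j, j ≠ a → j ≠ b → x j = true) :
    mux a b x = x b := if_pos h

lemma mux_of_exists {x : ι → Bool} (h : ∃ j, j ≠ a ∧ j ≠ b ∧ x j = false) :
    mux a b x = x a := if_neg fun hall => by
  obtain ⟨j, hja, hjb, hj⟩ := h
  simp [hall j hja hjb] at hj

lemma mux_eq_false {x : ι → Bool} (ha : x a = false) (hb : x b = false) : mux a b x = false := by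
  unfold mux; split_ifs <;> assumption

lemma mux_flipAt_flipAt (hab : a ≠ b) (x : ι → Bool) :
    mux a b (flipAt a (flipAt b x)) = !mux a b x := by
  have hrest : ∀ j, j ≠ a → j ≠ b → flipAt a (flipAt b x) j = x j := fun j hja hjb => by
    simp [hja, hjb]
  unfold mux
  split_ifs <;> simp_all [hab.symm]

lemma two_mul_card_mux_eq_false (hab : a ≠ b) :
    2 * (Finset.univ.filter fun x => mux a b x = false).card = 2 ^ Fintype.card ι := by
  rw [two_mul_card_filter_eq_false (mux a b) _ (mux_flipAt_flipAt hab)]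
  · simp
  · intro x
    change flipAt a (flipAt b (flipAt a (flipAt b x))) = x
    rw [flipAt_comm a b, flipAt_involutive, flipAt_involutive]

lemma boolDeriv_mux_const_true (hab : a ≠ b) (i : ι) :
    boolDeriv i (mux a b) (fun _ => true) = decide (i = b) := by
  by_cases hi : i = a ∨ i = b
  · rcases hi with rfl | rfl <;>
      rw [boolDeriv, mux_of_forall (by simp), mux_of_forall fun j hja hjb => by simp [hja, hjb]] <;>
      simp [hab, hab.symm]
  · push Not at hi
    rw [boolDeriv, mux_of_forall (by simp), mux_of_exists ⟨i, hi.1, hi.2, by simp⟩]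
    simp [hi.1.symm, hi.2]

lemma boolDeriv_mux_const_false {c : ι} (hca : c ≠ a) (hcb : c ≠ b) (i : ι) :
    boolDeriv i (mux a b) (fun _ => false) = decide (i = a) := by
  rw [boolDeriv, mux_of_exists ⟨c, hca, hcb, rfl⟩]
  by_cases hi : i = a ∨ i = b
  · have hci : c ≠ i := by rcases hi with rfl | rfl <;> assumption
    rw [mux_of_exists ⟨c, hca, hcb, by simp [hci]⟩]
    by_cases hia : i = a
    · simp [hia]
    · simp [hia, Ne.symm hia]
  · push Not at hi
    rw [mux_eq_false (by simp [hi.1.symm]) (by simp [hi.2.symm])]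
    simp [hi.1]

lemma boolDeriv_mux_flipAt_const_true (hab : a ≠ b) {i : ι} (hia : i ≠ a) (hib : i ≠ b) :
    boolDeriv i (mux a b) (flipAt a fun _ => true) = true := by
  rw [boolDeriv, mux_of_forall fun j hja _ => by simp [hja],
    mux_of_exists ⟨i, hia, hib, by simp [hia]⟩]
  simp [hia.symm, hab.symm]

theorem not_phaseFactorsAt_mux (hab : a ≠ b) {c : ι} (hca : c ≠ a) (hcb : c ≠ b) (i : ι) :
    ¬ PhaseFactorsAt (mux a b) i := by
  by_cases hi : i = a ∨ i = b
  · apply not_phaseFactorsAt_of_boolDeriv_ne (x := fun _ => true) (y := fun _ => false)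
    rw [boolDeriv_mux_const_true hab, boolDeriv_mux_const_false hca hcb]
    rcases hi with rfl | rfl <;> simp [hab, hab.symm]
  · push Not at hi
    apply not_phaseFactorsAt_of_boolDeriv_ne (x := flipAt a fun _ => true) (y := fun _ => false)
    rw [boolDeriv_mux_flipAt_const_true hab hi.1 hi.2, boolDeriv_mux_const_false hca hcb]
    simp [hi.1]

end Mux

end BooleanFunction

open BooleanFunction

/-- For every `n ≥ 3` there is a valid `f : {0,1}^n → {0,1}` whose phase state
`v_f(x) = (-1)^(f x)` is maximally entangled: no qubit `i` can be factored out, i.e.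
there are no `φ : {0,1} → ℂ` and `ψ : {0,1}^(n-1) → ℂ` with
`v_f(x) = φ(x_i) · ψ(x₁,...,x_{i-1},x_{i+1},...,x_n)` for all `x`. -/
theorem exists_valid_maximally_entangled (n : ℕ) (hn : 3 ≤ n) :
    ∃ f : (Fin n → Bool) → Bool, ValidFn n f ∧
      ∀ i : Fin n,
        ¬ ∃ (φ : Bool → ℂ) (ψ : ({j : Fin n // j ≠ i} → Bool) → ℂ),
          ∀ x : Fin n → Bool,
            ((-1 : ℂ) ^ (f x).toNat) = φ (x i) * ψ (fun j => x j.1) := by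
  have h01 : (⟨0, by omega⟩ : Fin n) ≠ ⟨1, by omega⟩ := by simp
  refine ⟨mux ⟨0, by omega⟩ ⟨1, by omega⟩, Or.inr ?_,
    not_phaseFactorsAt_mux h01 (c := ⟨2, by omega⟩) (by simp) (by simp)⟩
  have hcard := two_mul_card_mux_eq_false h01
  have hpow : 2 ^ n = 2 * 2 ^ (n - 1) := by rw [← pow_succ']; congr 1; omega
  rw [Fintype.card_fin, hpow] at hcard
  omega
end

section
/- Let n ≥ 3 and define f : {0,...,2^n−1} → {0,1} by f(a) = 0 for a ∈ {0, 1, ..., 2^{n−1}−2} ∪ {2^n−2} and f(a) = 1 otherwise. Then f is balanced, and for every index i ∈ {1,...,n} there do not exist a vector φ : {0,1} → ℂ and a vector ψ : {0,1}^{n−1} → ℂ with (−1)^{f(x)} = φ(x_i) · ψ(x_1,...,x_{i−1},x_{i+1},...,x_n) for all x ∈ {0,1}^n (identifying a ∈ {0,...,2^n−1} with its binary expansion x ∈ {0,1}^n, most significant bit first). -/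
lemma sum_testBit (n : ℕ) : ∀ a < 2 ^ n,
    ∑ j : Fin n, (a.testBit (j : ℕ)).toNat * 2 ^ (j : ℕ) = a := by
  induction n with
  | zero => intro a ha; simpa using by omega
  | succ n ih =>
    intro a ha
    have hp : 2 ^ (n + 1) = 2 ^ n * 2 := pow_succ 2 n
    have h2 : a / 2 < 2 ^ n := by omega
    have key := ih (a / 2) h2
    rw [Fin.sum_univ_succ]
    have hsucc : ∑ j : Fin n, (a.testBit ((j : ℕ) + 1)).toNat * 2 ^ ((j : ℕ) + 1)
        = 2 * (a / 2) := by
      rw [← key, Finset.mul_sum]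
      refine Finset.sum_congr rfl fun j _ => ?_
      rw [Nat.testBit_add_one]
      ring
    simp only [Fin.val_succ, Fin.val_zero, pow_zero, mul_one]
    rw [hsucc]
    have h0 : (a.testBit 0).toNat = a % 2 := by
      rw [Nat.testBit_zero]
      rcases Nat.mod_two_eq_zero_or_one a with h | h <;> simp [h]
    omega

lemma sum_testBit_rev (n a : ℕ) (h : a < 2 ^ n) :
    ∑ j : Fin n, (a.testBit (n - 1 - (j : ℕ))).toNat * 2 ^ (n - 1 - (j : ℕ)) = a := by
  refine (Fintype.sum_bijective Fin.rev Fin.rev_bijective _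
    (fun j : Fin n => (a.testBit (j : ℕ)).toNat * 2 ^ (j : ℕ)) fun j => ?_).trans
    (sum_testBit n a h)
  simp only [Fin.val_rev]
  have : n - 1 - (j : ℕ) = n - ((j : ℕ) + 1) := by omega
  rw [this]

lemma testBit_aux (m b : ℕ) (hb : b + 1 ≤ m) : (2 ^ m - 1 - 2 ^ b).testBit b = false := by
  have hlt : 2 ^ b < 2 ^ m := Nat.pow_lt_pow_right (by norm_num) (by omega)
  have h : 2 ^ m - 1 - 2 ^ b = 2 ^ m - (2 ^ b + 1) := by omega
  rw [h, Nat.testBit_two_pow_sub_succ hlt]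
  simp [Nat.testBit_two_pow_self]

lemma pair_eq {n : ℕ} (i : Fin n) (f : ℕ → Bool) (φ : Bool → ℂ)
    (ψ : ({j : Fin n // j ≠ i} → Bool) → ℂ)
    (hsep : ∀ x : Fin n → Bool,
      ((-1 : ℂ) ^ (f (∑ j : Fin n, (x j).toNat * 2 ^ (n - 1 - (j : ℕ)))).toNat) =
        φ (x i) * ψ (fun j => x j.1))
    (a : ℕ) (ha : a < 2 ^ n) (hb : a.testBit (n - 1 - (i : ℕ)) = false) :
    ∃ r, ((-1 : ℂ) ^ (f a).toNat = φ false * ψ r ∧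
      (-1 : ℂ) ^ (f (a + 2 ^ (n - 1 - (i : ℕ)))).toNat = φ true * ψ r) := by
  set x : Fin n → Bool := fun j => a.testBit (n - 1 - (j : ℕ)) with hx
  have hxi : x i = false := hb
  refine ⟨fun j => x j.1, ?_, ?_⟩
  · have h1 := hsep x
    rw [sum_testBit_rev n a ha, hxi] at h1
    exact h1
  · have h1 := hsep (Function.update x i true)
    have hrest : (fun j : {j : Fin n // j ≠ i} => Function.update x i true j.1)
        = fun j : {j : Fin n // j ≠ i} => x j.1 := by
      funext j
      exact Function.update_of_ne j.2 _ _
    have hs : ∑ j : Fin n, (Function.update x i true j).toNat * 2 ^ (n - 1 - (j : ℕ))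
        = a + 2 ^ (n - 1 - (i : ℕ)) := by
      have e1 := (Finset.add_sum_erase Finset.univ
        (fun j : Fin n => (Function.update x i true j).toNat * 2 ^ (n - 1 - (j : ℕ)))
        (Finset.mem_univ i)).symm
      have e2 := (Finset.add_sum_erase Finset.univ
        (fun j : Fin n => (x j).toNat * 2 ^ (n - 1 - (j : ℕ)))
        (Finset.mem_univ i)).symm
      have e3 : ∑ j ∈ Finset.univ.erase i,
            (Function.update x i true j).toNat * 2 ^ (n - 1 - (j : ℕ))
          = ∑ j ∈ Finset.univ.erase i, (x j).toNat * 2 ^ (n - 1 - (j : ℕ)) := by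
        refine Finset.sum_congr rfl fun j hj => ?_
        rw [Function.update_of_ne (Finset.mem_erase.1 hj).1]
      have e4 := sum_testBit_rev n a ha
      rw [e2] at e4
      rw [e1, e3, Function.update_self, hxi] at *
      simp only [Bool.toNat_true, Bool.toNat_false, one_mul, zero_mul] at *
      omega
    rw [hs, Function.update_self, hrest] at h1
    exact h1

lemma contra_aux {R : Type*} (φ : Bool → ℂ) (ψ : R → ℂ) (r0 r1 : R)
    (h00 : (1 : ℂ) = φ false * ψ r0) (h01 : (1 : ℂ) = φ true * ψ r0)
    (h10 : (1 : ℂ) = φ false * ψ r1) (h11 : (-1 : ℂ) = φ true * ψ r1) : False := by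
  have hψ : ψ r0 ≠ 0 := by
    intro h
    rw [h, mul_zero] at h00
    exact one_ne_zero h00
  have hφ : φ false = φ true := mul_right_cancel₀ hψ (h00.symm.trans h01)
  rw [← hφ, ← h10] at h11
  norm_num at h11

/-- Let `n ≥ 3` and let `f : {0,...,2^n - 1} → {0,1}` take the value `0` exactly on
`{0, 1, ..., 2^(n-1) - 2} ∪ {2^n - 2}` and `1` elsewhere. Then `f` is balanced, and
(identifying an index with its binary expansion, most significant bit first) the phase
state `x ↦ (-1)^(f x)` has no separable qubit: for every `i` there do not exist
`φ : {0,1} → ℂ` and `ψ : {0,1}^(n-1) → ℂ` factoring it through the `i`-th bit. -/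
theorem explicit_balanced_maximally_entangled (n : ℕ) (hn : 3 ≤ n) (f : ℕ → Bool)
    (hf : ∀ a, a < 2 ^ n →
      f a = if a ≤ 2 ^ (n - 1) - 2 ∨ a = 2 ^ n - 2 then false else true) :
    ((Finset.range (2 ^ n)).filter fun a => f a = false).card = 2 ^ (n - 1) ∧
      ∀ i : Fin n,
        ¬ ∃ (φ : Bool → ℂ) (ψ : ({j : Fin n // j ≠ i} → Bool) → ℂ),
          ∀ x : Fin n → Bool,
            ((-1 : ℂ) ^ (f (∑ j : Fin n, (x j).toNat * 2 ^ (n - 1 - (j : ℕ)))).toNat) =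
              φ (x i) * ψ (fun j => x j.1) := by
  have hH : (4 : ℕ) ≤ 2 ^ (n - 1) := by
    calc (4 : ℕ) = 2 ^ 2 := by norm_num
    _ ≤ 2 ^ (n - 1) := Nat.pow_le_pow_right (by norm_num) (by omega)
  have hpow : 2 ^ n = 2 ^ (n - 1) * 2 := by
    rw [← pow_succ]
    congr 1
    omega
  constructor
  · have hset : (Finset.range (2 ^ n)).filter (fun a => f a = false)
        = insert (2 ^ n - 2) (Finset.range (2 ^ (n - 1) - 1)) := by
      ext a
      simp only [Finset.mem_filter, Finset.mem_range, Finset.mem_insert]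
      constructor
      · rintro ⟨ha, hfa⟩
        rw [hf a ha] at hfa
        by_cases hc : a ≤ 2 ^ (n - 1) - 2 ∨ a = 2 ^ n - 2
        · rcases hc with h1 | h2
          · right; omega
          · left; exact h2
        · rw [if_neg hc] at hfa
          exact absurd hfa (by simp)
      · intro h
        have ha : a < 2 ^ n := by omega
        refine ⟨ha, ?_⟩
        rw [hf a ha, if_pos (by omega)]
    rw [hset, Finset.card_insert_of_notMem (by simp only [Finset.mem_range]; omega),
      Finset.card_range]
    omega
  · rintro i ⟨φ, ψ, hsep⟩
    by_cases hi : (i : ℕ) = 0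
    · -- most significant bit: pairs (2^(n-1)-2, 2^n-2) same, (0, 2^(n-1)) differ
      have hbi : n - 1 - (i : ℕ) = n - 1 := by omega
      have h0 : (0 : ℕ).testBit (n - 1 - (i : ℕ)) = false := Nat.zero_testBit _
      have ht : (2 ^ (n - 1) - 2).testBit (n - 1 - (i : ℕ)) = false := by
        rw [hbi]
        exact Nat.testBit_lt_two_pow (by omega)
      obtain ⟨r1, e10, e11⟩ := pair_eq i f φ ψ hsep 0 (by omega) h0
      obtain ⟨r0, e00, e01⟩ := pair_eq i f φ ψ hsep (2 ^ (n - 1) - 2) (by omega) ht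
      rw [hbi] at e11 e01
      rw [zero_add] at e11
      have hA : 2 ^ (n - 1) - 2 + 2 ^ (n - 1) = 2 ^ n - 2 := by omega
      rw [hA] at e01
      have f1 : f 0 = false := by rw [hf 0 (by omega), if_pos (by omega)]
      have f2 : f (2 ^ (n - 1)) = true := by
        rw [hf _ (by omega), if_neg (by omega)]
      have f3 : f (2 ^ (n - 1) - 2) = false := by
        rw [hf _ (by omega), if_pos (by omega)]
      have f4 : f (2 ^ n - 2) = false := by
        rw [hf _ (by omega), if_pos (by omega)]
      rw [f1] at e10; rw [f2] at e11; rw [f3] at e00; rw [f4] at e01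
      simp only [Bool.toNat_false, Bool.toNat_true, pow_zero, pow_one] at e10 e11 e00 e01
      exact contra_aux φ ψ r0 r1 e00 e01 e10 e11
    · -- lower bit b = n-1-i : pairs (0, 2^b) same, (2^(n-1)-1-2^b, 2^(n-1)-1) differ
      set b := n - 1 - (i : ℕ) with hbdef
      have hib : (i : ℕ) ≤ n - 1 := by omega
      have hble : b + 1 ≤ n - 1 := by omega
      have hw2 : 2 ^ b * 2 ≤ 2 ^ (n - 1) := by
        rw [← pow_succ]
        exact Nat.pow_le_pow_right (by norm_num) hble
      have hw1 : 1 ≤ 2 ^ b := Nat.one_le_two_pow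
      have h0 : (0 : ℕ).testBit b = false := Nat.zero_testBit _
      have ht : (2 ^ (n - 1) - 1 - 2 ^ b).testBit b = false := testBit_aux (n - 1) b hble
      obtain ⟨r0, e00, e01⟩ := pair_eq i f φ ψ hsep 0 (by omega) h0
      obtain ⟨r1, e10, e11⟩ := pair_eq i f φ ψ hsep (2 ^ (n - 1) - 1 - 2 ^ b) (by omega) ht
      rw [zero_add] at e01
      have hA : 2 ^ (n - 1) - 1 - 2 ^ b + 2 ^ b = 2 ^ (n - 1) - 1 := by omega
      rw [hA] at e11
      have f1 : f 0 = false := by rw [hf 0 (by omega), if_pos (by omega)]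
      have f2 : f (2 ^ b) = false := by
        rw [hf _ (by omega), if_pos (by omega)]
      have f3 : f (2 ^ (n - 1) - 1 - 2 ^ b) = false := by
        rw [hf _ (by omega), if_pos (by omega)]
      have f4 : f (2 ^ (n - 1) - 1) = true := by
        rw [hf _ (by omega), if_neg (by omega)]
      rw [f1] at e00; rw [f2] at e01; rw [f3] at e10; rw [f4] at e11
      simp only [Bool.toNat_false, Bool.toNat_true, pow_zero, pow_one] at e00 e01 e10 e11
      exact contra_aux φ ψ r0 r1 e00 e01 e10 e11
end

section
/- For every n ≥ 1, the number of functions f : {0,1}^n → {0,1} such that the phase state v_f of f is fully separable equals 2^{n+1}. -/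
open Finset

private lemma neg_one_pow_xor (b c : Bool) :
    ((-1 : ℂ)) ^ ((b ^^ c).toNat) = (-1) ^ b.toNat * (-1) ^ c.toNat := by
  cases b <;> cases c <;> norm_num

private lemma neg_one_pow_toNat_inj {b c : Bool}
    (h : ((-1 : ℂ)) ^ b.toNat = (-1) ^ c.toNat) : b = c := by
  cases b <;> cases c <;> simp_all <;> norm_num at h

private lemma neg_one_pow_mod_two (m : ℕ) :
    ((-1 : ℂ)) ^ (m % 2) = (-1) ^ m := by
  conv_rhs => rw [← Nat.div_add_mod m 2]
  rw [pow_add, pow_mul]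
  norm_num

namespace CardSep

variable {n : ℕ}

def F (c : Bool) (a : Fin n → Bool) (x : Fin n → Bool) : Bool :=
  c ^^ decide ((∑ i, (a i && x i).toNat) % 2 = 1)

lemma pow_F (c : Bool) (a x : Fin n → Bool) :
    ((-1 : ℂ)) ^ (F c a x).toNat =
      (-1) ^ c.toNat * (-1) ^ (∑ i, (a i && x i).toNat) := by
  rw [F, neg_one_pow_xor]
  congr 1
  have h : (decide ((∑ i, (a i && x i).toNat) % 2 = 1)).toNat
       = (∑ i, (a i && x i).toNat) % 2 := by
    rcases Nat.mod_two_eq_zero_or_one (∑ i, (a i && x i).toNat) with h | h <;> simp [h]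
  rw [h, neg_one_pow_mod_two]

def e (i : Fin n) : Fin n → Bool := fun j => decide (j = i)

lemma F_zero (c : Bool) (a : Fin n → Bool) : F c a (fun _ => false) = c := by
  simp [F]

lemma F_e (c : Bool) (a : Fin n → Bool) (i : Fin n) : F c a (e i) = (c ^^ a i) := by
  have hs : (∑ j, (a j && e i j).toNat) = (a i).toNat := by
    rw [Finset.sum_eq_single i]
    · simp [e]
    · intro j _ hj; simp [e, hj]
    · simp
  rw [F, hs]
  cases a i <;> simp

lemma F_injective :
    Function.Injective (fun p : Bool × (Fin n → Bool) => F p.1 p.2) := by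
  rintro ⟨c, a⟩ ⟨c', a'⟩ h
  simp only at h
  have hc : c = c' := by
    have := congrFun h (fun _ => false)
    rwa [F_zero, F_zero] at this
  refine Prod.ext hc (funext fun i => ?_)
  have h2 := congrFun h (e i)
  rw [F_e, F_e, hc] at h2
  cases c' <;> cases a i <;> cases a' i <;> simp_all

-- F c a is separable
lemma F_separable (hn : 1 ≤ n) (c : Bool) (a : Fin n → Bool) :
    ∃ ψ : Fin n → Bool → ℂ,
      ∀ x : Fin n → Bool, ((-1 : ℂ) ^ (F c a x).toNat) = ∏ i : Fin n, ψ i (x i) := by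
  set i0 : Fin n := ⟨0, hn⟩
  refine ⟨fun i b => (if i = i0 then ((-1 : ℂ)) ^ c.toNat else 1) * (-1) ^ ((a i && b).toNat),
    fun x => ?_⟩
  rw [pow_F]
  rw [Finset.prod_mul_distrib]
  congr 1
  · rw [Finset.prod_eq_single i0]
    · simp
    · intro j _ hj; simp [hj]
    · simp
  · rw [← Finset.prod_pow_eq_pow_sum]

-- converse: every separable f is of the form F c a
lemma separable_eq_F (f : (Fin n → Bool) → Bool)
    (hf : ∃ ψ : Fin n → Bool → ℂ,
      ∀ x : Fin n → Bool, ((-1 : ℂ) ^ (f x).toNat) = ∏ i : Fin n, ψ i (x i)) :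
    ∃ c a, f = F c a := by
  obtain ⟨ψ, hψ⟩ := hf
  set c : Bool := f (fun _ => false) with hc
  set a : Fin n → Bool := fun i => f (e i) ^^ c with ha
  -- ψ i false ≠ 0
  have hzero : ((-1 : ℂ)) ^ c.toNat = ∏ i, ψ i false := hψ (fun _ => false)
  have hne : ∀ i, ψ i false ≠ 0 := by
    intro i hi
    have : (∏ i, ψ i false) = 0 := Finset.prod_eq_zero (Finset.mem_univ i) hi
    rw [← hzero] at this
    cases c <;> norm_num at this
  set r : Fin n → ℂ := fun i => ψ i true / ψ i false with hr
  have hψb : ∀ i (b : Bool), ψ i b = ψ i false * r i ^ b.toNat := by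
    intro i b
    cases b
    · simp
    · simp only [hr, Bool.toNat_true, pow_one]
      rw [mul_comm, div_mul_cancel₀ _ (hne i)]
  have key : ∀ x, ((-1 : ℂ)) ^ (f x).toNat
      = (-1) ^ c.toNat * ∏ i, r i ^ (x i).toNat := by
    intro x
    rw [hψ x]
    calc ∏ i, ψ i (x i) = ∏ i, (ψ i false * r i ^ (x i).toNat) := by
          exact Finset.prod_congr rfl fun i _ => hψb i (x i)
      _ = (∏ i, ψ i false) * ∏ i, r i ^ (x i).toNat := Finset.prod_mul_distrib
      _ = (-1) ^ c.toNat * ∏ i, r i ^ (x i).toNat := by rw [← hzero]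
  have hri : ∀ i, r i = ((-1 : ℂ)) ^ (a i).toNat := by
    intro i
    have h1 := key (e i)
    have h2 : (∏ j, r j ^ ((e i j).toNat)) = r i := by
      rw [Finset.prod_eq_single i]
      · simp [e]
      · intro j _ hj; simp [e, hj]
      · simp
    rw [h2] at h1
    have h3 : ((-1 : ℂ)) ^ (f (e i)).toNat = (-1) ^ c.toNat * (-1) ^ (a i).toNat := by
      rw [ha]
      simp only
      rw [neg_one_pow_xor (f (e i)) c]
      cases c <;> cases f (e i) <;> norm_num
    rw [h3] at h1
    have hcne : ((-1 : ℂ)) ^ c.toNat ≠ 0 := by cases c <;> norm_num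
    exact (mul_left_cancel₀ hcne h1).symm
  refine ⟨c, a, funext fun x => ?_⟩
  apply neg_one_pow_toNat_inj
  rw [key x, pow_F]
  congr 1
  rw [← Finset.prod_pow_eq_pow_sum]
  refine Finset.prod_congr rfl fun i _ => ?_
  rw [hri i, ← pow_mul]
  congr 1
  cases a i <;> cases x i <;> rfl

end CardSep

/-- For every `n ≥ 1`, the number of Boolean functions `f : {0,1}^n → {0,1}` whose phase
state `v_f(x) = (-1)^(f x)` is fully separable (a product `ψ₁(x₁) ⋯ ψₙ(xₙ)`) is `2^(n+1)`. -/
theorem card_separable_phase_states (n : ℕ) (hn : 1 ≤ n) :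
    Nat.card {f : (Fin n → Bool) → Bool //
      ∃ ψ : Fin n → Bool → ℂ,
        ∀ x : Fin n → Bool, ((-1 : ℂ) ^ (f x).toNat) = ∏ i : Fin n, ψ i (x i)} =
      2 ^ (n + 1) := by
  have hbij : Function.Bijective
      (fun p : Bool × (Fin n → Bool) =>
        (⟨CardSep.F p.1 p.2, CardSep.F_separable hn p.1 p.2⟩ :
          {f : (Fin n → Bool) → Bool //
            ∃ ψ : Fin n → Bool → ℂ,
              ∀ x : Fin n → Bool, ((-1 : ℂ) ^ (f x).toNat) = ∏ i : Fin n, ψ i (x i)})) := by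
    constructor
    · intro p q h
      exact CardSep.F_injective (congrArg Subtype.val h)
    · rintro ⟨f, hf⟩
      obtain ⟨c, a, rfl⟩ := CardSep.separable_eq_F f hf
      exact ⟨(c, a), rfl⟩
  have := Nat.card_eq_of_bijective _ hbij
  rw [← this, Nat.card_prod, Nat.card_eq_fintype_card, Nat.card_eq_fintype_card]
  simp [pow_succ, mul_comm]
end

section
/- For every n ≥ 1, let a_n denote the number of functions f : {0,1}^n → {0,1} whose phase state v_f is fully separable. Then a_{n+1} = 2 · a_n, and a_1 = 4. -/
/-!
A nowhere-vanishing product `v x = ∏ᵢ ψᵢ(xᵢ)` is determined by `v 0` and the ratios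
`ψⱼ(1)/ψⱼ(0) = v(eⱼ)/v(0)`. For a `±1`-valued phase state `v_f` this forces `f` to be affine
over `𝔽₂`: `f x = f 0 ⊕ ⨁ⱼ (f 0 ⊕ f eⱼ) xⱼ`. Conversely the phase state of `x ↦ c ⊕ ⨁ⱼ aⱼ xⱼ`
is `∏ⱼ (-1)^(aⱼ xⱼ)` with the sign `(-1)^c` absorbed into one factor, which needs `n ≥ 1`.
So `a_n = 2^(n+1)` for `n ≥ 1`.
-/

/-- `numSeparable n` is the number of Boolean functions `f : {0,1}^n → {0,1}` whose phase
state `v_f(x) = (-1)^(f x)` is fully separable (a product `ψ₁(x₁) ⋯ ψₙ(xₙ)`). -/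
noncomputable def numSeparable (n : ℕ) : ℕ :=
  Nat.card {f : (Fin n → Bool) → Bool //
    ∃ ψ : Fin n → Bool → ℂ,
      ∀ x : Fin n → Bool, ((-1 : ℂ) ^ (f x).toNat) = ∏ i : Fin n, ψ i (x i)}

open Finset

namespace PhaseState

variable {ι : Type*} [Fintype ι]

def IsFullySeparable {K : Type*} [CommMonoid K] (v : (ι → Bool) → K) : Prop :=
  ∃ ψ : ι → Bool → K, ∀ x, v x = ∏ i, ψ i (x i)

noncomputable def boolSign (b : Bool) : ℂ := (-1) ^ b.toNat

noncomputable def phaseState (f : (ι → Bool) → Bool) : (ι → Bool) → ℂ :=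
  fun x => boolSign (f x)

@[simp] lemma boolSign_false : boolSign false = 1 := pow_zero _

lemma boolSign_eq_ite (b : Bool) : boolSign b = if b then -1 else 1 := by
  cases b <;> simp [boolSign]

lemma boolSign_xor (b c : Bool) : boolSign (b ^^ c) = boolSign b * boolSign c := by
  cases b <;> cases c <;> simp [boolSign]

lemma boolSign_mul_self (b : Bool) : boolSign b * boolSign b = 1 := by
  cases b <;> simp [boolSign]

lemma boolSign_ne_zero (b : Bool) : boolSign b ≠ 0 := by
  cases b <;> simp [boolSign]

lemma boolSign_injective : Function.Injective boolSign := by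
  intro b c
  cases b <;> cases c <;> norm_num [boolSign]

lemma boolSign_decide_odd (k : ℕ) : boolSign (decide (Odd k)) = (-1) ^ k := by
  rcases Nat.even_or_odd k with hk | hk
  · simp [boolSign, hk.neg_one_pow, Nat.not_odd_iff_even.mpr hk]
  · simp [boolSign, hk.neg_one_pow, hk]

def affine (c : Bool) (a x : ι → Bool) : Bool :=
  c ^^ decide (Odd #{i | a i && x i})

lemma boolSign_affine (c : Bool) (a x : ι → Bool) :
    boolSign (affine c a x) = boolSign c * ∏ i, boolSign (a i && x i) := by
  rw [affine, boolSign_xor, boolSign_decide_odd]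
  congr 1
  simp only [boolSign_eq_ite, prod_ite, prod_const, one_pow, mul_one]

lemma affine_false (c : Bool) (a : ι → Bool) : affine c a (fun _ => false) = c := by
  simp [affine]

lemma prod_eq_prod_false_mul {K : Type*} [CommGroupWithZero K] {ψ : ι → Bool → K}
    (hψ : ∀ i, ψ i false ≠ 0) (x : ι → Bool) :
    ∏ i, ψ i (x i) = (∏ i, ψ i false) * ∏ i, if x i then ψ i true / ψ i false else 1 := by
  rw [← prod_mul_distrib]
  refine prod_congr rfl fun i _ => ?_
  cases x i <;> simp [mul_div_cancel₀ _ (hψ i)]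

variable [DecidableEq ι]

def unitVec (j : ι) : ι → Bool := fun i => decide (i = j)

lemma affine_unitVec (c : Bool) (a : ι → Bool) (j : ι) :
    affine c a (unitVec j) = (c ^^ a j) := by
  apply boolSign_injective
  rw [boolSign_affine, boolSign_xor, prod_eq_single j (fun i _ hij => by simp [unitVec, hij])
    (by simp)]
  simp [unitVec]

lemma eq_affine_of_isFullySeparable {f : (ι → Bool) → Bool}
    (h : IsFullySeparable (phaseState f)) :
    f = affine (f fun _ => false) (fun j => f (fun _ => false) ^^ f (unitVec j)) := by
  obtain ⟨ψ, hψ⟩ := h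
  set x₀ : ι → Bool := fun _ => false
  have hψ₀ : ∀ i, ψ i false ≠ 0 := by
    have h₀ : ∏ i, ψ i (x₀ i) ≠ 0 := by rw [← hψ x₀]; exact boolSign_ne_zero _
    exact fun i => prod_ne_zero_iff.mp h₀ i (mem_univ i)
  set r : ι → ℂ := fun i => ψ i true / ψ i false
  have hval (x : ι → Bool) :
      boolSign (f x) = boolSign (f x₀) * ∏ i, if x i then r i else 1 := by
    rw [show boolSign (f x) = phaseState f x from rfl, hψ, prod_eq_prod_false_mul hψ₀, ← hψ x₀]
    rfl
  have hr (j : ι) : r j = boolSign (f x₀ ^^ f (unitVec j)) := by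
    have hj := hval (unitVec j)
    simp only [unitVec, decide_eq_true_eq, prod_ite_eq', mem_univ, if_true] at hj
    rw [boolSign_xor, hj, ← mul_assoc, boolSign_mul_self, one_mul]
  funext x
  apply boolSign_injective
  rw [hval, boolSign_affine]
  congr 1
  refine prod_congr rfl fun i _ => ?_
  cases x i <;> simp [hr]

variable [Nonempty ι]

lemma affine_isFullySeparable (c : Bool) (a : ι → Bool) :
    IsFullySeparable (phaseState (affine c a)) := by
  obtain ⟨i₀⟩ := ‹Nonempty ι›
  refine ⟨fun i b => (if i = i₀ then boolSign c else 1) * boolSign (a i && b), fun x => ?_⟩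
  rw [phaseState, boolSign_affine, prod_mul_distrib, prod_ite_eq' univ i₀]
  simp

def separableEquiv :
    {f : (ι → Bool) → Bool // IsFullySeparable (phaseState f)} ≃ Bool × (ι → Bool) where
  toFun f := (f.1 fun _ => false, fun j => f.1 (fun _ => false) ^^ f.1 (unitVec j))
  invFun p := ⟨affine p.1 p.2, affine_isFullySeparable p.1 p.2⟩
  left_inv f := Subtype.ext (eq_affine_of_isFullySeparable f.2).symm
  right_inv p := by simp [affine_false, affine_unitVec]

lemma card_isFullySeparable :
    Nat.card {f : (ι → Bool) → Bool // IsFullySeparable (phaseState f)} =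
      2 ^ (Fintype.card ι + 1) := by
  rw [Nat.card_congr separableEquiv, Nat.card_eq_fintype_card, Fintype.card_prod, Fintype.card_fun,
    Fintype.card_bool, pow_succ']

end PhaseState

open PhaseState in
lemma numSeparable_eq_two_pow {n : ℕ} (hn : 1 ≤ n) : numSeparable n = 2 ^ (n + 1) := by
  have : Nonempty (Fin n) := ⟨⟨0, hn⟩⟩
  have h : numSeparable n =
      Nat.card {f : (Fin n → Bool) → Bool // IsFullySeparable (phaseState f)} := rfl
  rw [h, card_isFullySeparable, Fintype.card_fin]

/-- The recurrence `a_{n+1} = 2 a_n` for `n ≥ 1`, together with the base case `a_1 = 4`,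
for the number `a_n` of Boolean functions on `n` bits with fully separable phase state. -/
theorem numSeparable_recurrence :
    (∀ n, 1 ≤ n → numSeparable (n + 1) = 2 * numSeparable n) ∧ numSeparable 1 = 4 := by
  refine ⟨fun n hn => ?_, numSeparable_eq_two_pow le_rfl⟩
  rw [numSeparable_eq_two_pow hn, numSeparable_eq_two_pow (by omega : 1 ≤ n + 1),
    pow_succ' 2 (n + 1)]
end

section
/- Every valid function f : {0,1}^2 → {0,1} satisfies f(00) ⊕ f(11) = f(01) ⊕ f(10) (where ⊕ denotes addition modulo 2); consequently the phase state v_f of every valid f on 2 bits satisfies v_f(00) · v_f(11) = v_f(01) · v_f(10) and is therefore separable. -/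
/-- A Boolean function `f : {0,1}² → {0,1}` is *valid* if it is constant or balanced
(i.e. `f = 0` on exactly 2 of the 4 inputs). -/
def Valid2 (f : Bool → Bool → Bool) : Prop :=
  (∃ a, ∀ x y, f x y = a) ∨
    (Finset.univ.filter fun p : Bool × Bool => f p.1 p.2 = false).card = 2

/-- Every valid `f : {0,1}² → {0,1}` satisfies `f(00) ⊕ f(11) = f(01) ⊕ f(10)`; hence its
phase state `v_f(xy) = (-1)^(f x y)` satisfies `v_f(00)·v_f(11) = v_f(01)·v_f(10)` and is
therefore separable. -/
theorem valid2_separable (f : Bool → Bool → Bool) (hf : Valid2 f) :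
    xor (f false false) (f true true) = xor (f false true) (f true false) ∧
    ((-1 : ℂ) ^ (f false false).toNat * (-1 : ℂ) ^ (f true true).toNat =
      (-1 : ℂ) ^ (f false true).toNat * (-1 : ℂ) ^ (f true false).toNat) ∧
    (∃ (a b : Bool → ℂ), ∀ x y, ((-1 : ℂ) ^ (f x y).toNat) = a x * b y) := by
  have h1 : xor (f false false) (f true true) = xor (f false true) (f true false) := by
    rcases hf with ⟨a, ha⟩ | h
    · simp [ha]
    · rw [Finset.card_filter, Fintype.sum_prod_type] at h
      simp only [Fintype.sum_bool] at h
      rcases h00 : f false false <;> rcases h01 : f false true <;>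
        rcases h10 : f true false <;> rcases h11 : f true true <;>
        simp_all
  have h2 : ((-1 : ℂ) ^ (f false false).toNat * (-1 : ℂ) ^ (f true true).toNat =
      (-1 : ℂ) ^ (f false true).toNat * (-1 : ℂ) ^ (f true false).toNat) := by
    rcases h00 : f false false <;> rcases h01 : f false true <;>
      rcases h10 : f true false <;> rcases h11 : f true true <;> simp_all
  refine ⟨h1, h2, fun x => (-1 : ℂ) ^ (f x false).toNat,
    fun y => (-1 : ℂ) ^ (f false y).toNat / (-1 : ℂ) ^ (f false false).toNat, ?_⟩
  have hne : ((-1 : ℂ) ^ (f false false).toNat) ≠ 0 := by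
    apply pow_ne_zero; norm_num
  rintro (_ | _) (_ | _) <;> dsimp only
  · field_simp
  · field_simp
  · rw [div_self hne, mul_one]
  · rw [mul_div_assoc', eq_div_iff hne, mul_comm ((-1 : ℂ) ^ (f true false).toNat)]
    rw [← h2]; ring
end

section
/- Let f : {0,1}^2 → {0,1} be valid and define C_f : ℂ^2 → ℂ^2 by C_f(a_1 + b_1 i, a_2 + b_2 i) = ((−1)^{f(00)}(a_1 + (−1)^{f(00) ⊕ f(10)} b_1 i), a_2 + (−1)^{f(10) ⊕ f(11)} b_2 i). Let z = 1 + i and let (w_1, w_2) = (z/2)·C_f(z, z) (componentwise multiplication by z/2). Then f is constant if and only if both w_1 and w_2 are purely imaginary; if f is balanced then at least one of w_1, w_2 is real (equal to ±1). Moreover each w_j ∈ {1, −1, i, −i}, and the sign of w_1 equals (−1)^{f(00)}. -/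
/-- The classical complex black-box for `f : {0,1}² → {0,1}` acting on a pair of complex
numbers: `C_f(a₁ + b₁·i, a₂ + b₂·i) = ((-1)^(f 00)·(a₁ + (-1)^(f 00 ⊕ f 10)·b₁·i),
a₂ + (-1)^(f 10 ⊕ f 11)·b₂·i)`. -/
noncomputable def Cf2 (f : Bool → Bool → Bool) (z : ℂ × ℂ) : ℂ × ℂ :=
  ((-1 : ℂ) ^ (f false false).toNat *
      ((z.1.re : ℂ) +
        (-1 : ℂ) ^ (xor (f false false) (f true false)).toNat * (z.1.im : ℂ) * Complex.I),
    (z.2.re : ℂ) +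
      (-1 : ℂ) ^ (xor (f true false) (f true true)).toNat * (z.2.im : ℂ) * Complex.I)

/-- The first output of the de-quantised `n = 2` algorithm, `w₁ = (z/2)·(C_f(z,z))₁`
with `z = 1 + i`. -/
noncomputable def w₁ (f : Bool → Bool → Bool) : ℂ :=
  (1 + Complex.I) / 2 * (Cf2 f (1 + Complex.I, 1 + Complex.I)).1

/-- The second output of the de-quantised `n = 2` algorithm, `w₂ = (z/2)·(C_f(z,z))₂`
with `z = 1 + i`. -/
noncomputable def w₂ (f : Bool → Bool → Bool) : ℂ :=
  (1 + Complex.I) / 2 * (Cf2 f (1 + Complex.I, 1 + Complex.I)).2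

/-- De-quantisation of the Deutsch–Jozsa problem for `n = 2`: `f` is constant iff both
`w₁` and `w₂` are purely imaginary; if `f` is balanced then at least one of `w₁, w₂` is
real (equal to `±1`); each `wⱼ ∈ {1, -1, i, -i}`; and the sign of `w₁` is `(-1)^(f 00)`. -/
theorem dequantised_deutsch_jozsa_two (f : Bool → Bool → Bool) (hf : Valid2 f) :
    ((∃ a, ∀ x y, f x y = a) ↔ ((w₁ f).re = 0 ∧ (w₂ f).re = 0)) ∧
    ((Finset.univ.filter fun p : Bool × Bool => f p.1 p.2 = false).card = 2 →
      (w₁ f = 1 ∨ w₁ f = -1) ∨ (w₂ f = 1 ∨ w₂ f = -1)) ∧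
    (w₁ f = 1 ∨ w₁ f = -1 ∨ w₁ f = Complex.I ∨ w₁ f = -Complex.I) ∧
    (w₂ f = 1 ∨ w₂ f = -1 ∨ w₂ f = Complex.I ∨ w₂ f = -Complex.I) ∧
    (w₁ f = (-1 : ℂ) ^ (f false false).toNat ∨
      w₁ f = (-1 : ℂ) ^ (f false false).toNat * Complex.I) := by
  have hfe : f = fun x y => if x then (if y then f true true else f true false)
      else (if y then f false true else f false false) := by
    funext x y; cases x <;> cases y <;> rfl
  cases h00 : f false false <;> cases h01 : f false true <;>
    cases h10 : f true false <;> cases h11 : f true true <;>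
  · rw [h00, h01, h10, h11] at hfe
    rw [hfe] at hf ⊢
    simp only [w₁, w₂, Cf2] at *
    norm_num [Complex.ext_iff, Complex.div_re, Complex.div_im, Valid2] at *
    all_goals revert hf; decide
end

section
/- Define f : {0,...,7} → {0,1} by (f(0), f(1), f(2), f(3), f(4), f(5), f(6), f(7)) = (0,0,0,1,1,1,1,0). Then f is balanced, and f(0) ⊕ f(3) ≠ f(1) ⊕ f(2); consequently the phase state v_f, with v_f(i) = (−1)^{f(i)}, satisfies v_f(0)·v_f(3) ≠ v_f(1)·v_f(2), is not pair product invariant, and is not fully separable. -/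
/-- The function `f : {0,...,7} → {0,1}` with values `(0,0,0,1,1,1,1,0)`. -/
def f18 : ℕ → Bool := fun a => decide (3 ≤ a ∧ a ≤ 6)

/-- The phase state of `f18`: `v18 a = (-1)^(f18 a)`. -/
noncomputable def v18 : ℕ → ℂ := fun a => (-1 : ℂ) ^ (f18 a).toNat

/-- The function `f` with values `(0,0,0,1,1,1,1,0)` is balanced, satisfies
`f(0) ⊕ f(3) ≠ f(1) ⊕ f(2)`; consequently its phase state satisfies
`v(0)·v(3) ≠ v(1)·v(2)`, is not pair product invariant, and is not fully separable
(identifying indices in `{0,...,7}` with bit strings in `{0,1}³`, most significant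
bit first). -/
theorem entangled_example :
    ((Finset.range 8).filter fun a => f18 a = false).card = 4 ∧
    xor (f18 0) (f18 3) ≠ xor (f18 1) (f18 2) ∧
    v18 0 * v18 3 ≠ v18 1 * v18 2 ∧
    ¬ (∀ k, 1 ≤ k → k ≤ 3 →
        ∃ c : ℂ, ∀ i, i ≤ 2 ^ k - 1 → v18 i * v18 (2 ^ k - i - 1) = c) ∧
    ¬ ∃ ψ₁ ψ₂ ψ₃ : Bool → ℂ, ∀ x₁ x₂ x₃ : Bool,
        v18 (4 * x₁.toNat + 2 * x₂.toNat + x₃.toNat) = ψ₁ x₁ * ψ₂ x₂ * ψ₃ x₃ := by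
  have h0 : v18 0 = 1 := by norm_num [v18, f18]
  have h1 : v18 1 = 1 := by norm_num [v18, f18]
  have h2 : v18 2 = 1 := by norm_num [v18, f18]
  have h3 : v18 3 = -1 := by norm_num [v18, f18]
  refine ⟨by decide, by decide, ?_, ?_, ?_⟩
  · rw [h0, h1, h2, h3]; norm_num
  · intro h
    obtain ⟨c, hc⟩ := h 2 (by norm_num) (by norm_num)
    have ha := hc 0 (by norm_num)
    have hb := hc 1 (by norm_num)
    norm_num [h0, h1, h2, h3] at ha hb
    rw [← hb] at ha
    norm_num at ha
  · rintro ⟨ψ₁, ψ₂, ψ₃, h⟩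
    have e000 := h false false false
    have e001 := h false false true
    have e010 := h false true false
    have e011 := h false true true
    norm_num [h0, h1, h2, h3] at e000 e001 e010 e011
    have key : (ψ₁ false * ψ₂ false * ψ₃ false) * (ψ₁ false * ψ₂ true * ψ₃ true)
        = (ψ₁ false * ψ₂ false * ψ₃ true) * (ψ₁ false * ψ₂ true * ψ₃ false) := by ring
    rw [← e000, ← e001, ← e010, ← e011] at key
    norm_num at key
end
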